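/- Dynamic programming correctness for the forward alignment matrix: let k : ℕ × ℕ → ℝ and define C : ℤ × ℤ → ℝ by the conventions C(−1,−1) = 1, C(p,−1) = 0 and C(−1,q) = 0 for p, q ≥ 0, and the recursion C(p,q) = k(p,q) · ( C(p−1, q) + C(p−1, q−1) + C(p, q−1) ) for p, q ≥ 0. Then for all natural numbers p, q, C(p,q) = ∑_π ∏_{l=0}^{L_π} k(π(l)), the sum ranging over all alignment paths π from (0,0) to (p,q). -/

import Mathlib

/-- `IsAlignPath a b π` : the list of grid cells `π` is an alignment path from `a` to
`b`, i.e. it is nonempty, starts at `a`, ends at `b`, and each increment between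
consecutive cells belongs to `{(1,0), (0,1), (1,1)}`. -/
def IsAlignPath (a b : ℕ × ℕ) (π : List (ℕ × ℕ)) : Prop :=
  π.head? = some a ∧ π.getLast? = some b ∧
  π.Chain' (fun u v : ℕ × ℕ => v = u + (1, 0) ∨ v = u + (0, 1) ∨ v = u + (1, 1))

/-!
Every alignment path to `(p, q) ≠ (0, 0)` is uniquely an alignment path to one of the grid
predecessors `(p - 1, q)`, `(p - 1, q - 1)`, `(p, q - 1)` followed by `(p, q)`, and paths to
distinct predecessors are distinct because they end differently. So the path sums satisfy the
recursion of `C`, whose boundary values discard the predecessors that leave the grid and start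
the recursion with the one-point path `[(0, 0)]`.
-/

def AlignStep (u v : ℕ × ℕ) : Prop :=
  v = u + (1, 0) ∨ v = u + (0, 1) ∨ v = u + (1, 1)

theorem isAlignPath_iff_isChain {a b : ℕ × ℕ} {π : List (ℕ × ℕ)} :
    IsAlignPath a b π ↔ π.head? = some a ∧ π.getLast? = some b ∧ π.IsChain AlignStep :=
  Iff.rfl

theorem isAlignPath_append_singleton_iff {a b c : ℕ × ℕ} {σ : List (ℕ × ℕ)} :
    IsAlignPath a b (σ ++ [c]) ↔
      c = b ∧ (σ = [] ∧ a = b ∨ ∃ u, IsAlignPath a u σ ∧ AlignStep u c) := by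
  rcases σ.eq_nil_or_concat' with rfl | ⟨τ, u, rfl⟩
  · simp [isAlignPath_iff_isChain]
    grind
  · rw [isAlignPath_iff_isChain, List.isChain_append]
    simp [isAlignPath_iff_isChain, List.head?_append]
    grind

theorem isAlignPath_iff {a b : ℕ × ℕ} {π : List (ℕ × ℕ)} :
    IsAlignPath a b π ↔
      π = [b] ∧ a = b ∨ ∃ u σ, IsAlignPath a u σ ∧ AlignStep u b ∧ σ ++ [b] = π := by
  rcases π.eq_nil_or_concat' with rfl | ⟨σ, c, rfl⟩
  · simp [IsAlignPath]
  · rw [isAlignPath_append_singleton_iff]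
    constructor
    · rintro ⟨rfl, ⟨rfl, rfl⟩ | ⟨u, hu, hs⟩⟩
      · exact .inl ⟨rfl, rfl⟩
      · exact .inr ⟨u, σ, hu, hs, rfl⟩
    · rintro (⟨h, rfl⟩ | ⟨u, τ, hu, hs, h⟩)
      · obtain ⟨rfl, rfl⟩ := (List.append_singleton_inj (bs := [])).mp h
        exact ⟨rfl, .inl ⟨rfl, rfl⟩⟩
      · obtain ⟨rfl, rfl⟩ := List.append_singleton_inj.mp h
        exact ⟨rfl, .inr ⟨u, hu, hs⟩⟩

theorem alignStep_iff {u : ℕ × ℕ} {p q : ℕ} :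
    AlignStep u (p, q) ↔ 0 < p ∧ u = (p - 1, q) ∨ 0 < p ∧ 0 < q ∧ u = (p - 1, q - 1) ∨
      0 < q ∧ u = (p, q - 1) := by
  obtain ⟨i, j⟩ := u
  simp only [AlignStep, Prod.mk_add_mk, Prod.ext_iff]
  omega

def alignPaths : ℕ → ℕ → Finset (List (ℕ × ℕ))
  | 0, 0 => {[(0, 0)]}
  | p + 1, 0 => (alignPaths p 0).image (· ++ [(p + 1, 0)])
  | 0, q + 1 => (alignPaths 0 q).image (· ++ [(0, q + 1)])
  | p + 1, q + 1 =>
      (alignPaths p (q + 1)).image (· ++ [(p + 1, q + 1)]) ∪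
      (alignPaths p q).image (· ++ [(p + 1, q + 1)]) ∪
      (alignPaths (p + 1) q).image (· ++ [(p + 1, q + 1)])

theorem mem_alignPaths {π : List (ℕ × ℕ)} {p q : ℕ} :
    π ∈ alignPaths p q ↔ IsAlignPath (0, 0) (p, q) π := by
  induction p, q using alignPaths.induct generalizing π <;>
    simp [alignPaths, isAlignPath_iff (π := π), alignStep_iff, or_and_right, and_or_left,
      exists_or, *]

theorem disjoint_alignPaths {p q p' q' : ℕ} (h : (p, q) ≠ (p', q')) :
    Disjoint (alignPaths p q) (alignPaths p' q') :=
  Finset.disjoint_left.mpr fun _ hπ hπ' => h <| Option.some_injective _ <|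
    (mem_alignPaths.mp hπ).2.1.symm.trans (mem_alignPaths.mp hπ').2.1

theorem sum_image_append_singleton {α R : Type*} [DecidableEq α] [Semiring R] (k : α → R)
    (x : α) (s : Finset (List α)) :
    ∑ π ∈ s.image (· ++ [x]), (π.map k).prod = (∑ σ ∈ s, (σ.map k).prod) * k x := by
  rw [Finset.sum_image fun _ _ _ _ => List.append_cancel_right, Finset.sum_mul]
  simp

theorem sum_alignPaths_eq {R : Type*} [CommSemiring R] (k : ℕ × ℕ → R)
    (C : ℤ → ℤ → R)
    (h0 : C (-1) (-1) = 1)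
    (h1 : ∀ p : ℕ, C p (-1) = 0)
    (h2 : ∀ q : ℕ, C (-1) q = 0)
    (hrec : ∀ p q : ℕ, C p q = k (p, q) * (C (p - 1) q + C (p - 1) (q - 1) + C p (q - 1)))
    (p q : ℕ) : ∑ π ∈ alignPaths p q, (π.map k).prod = C p q := by
  induction p, q using alignPaths.induct with
  | case1 =>
    have h := hrec 0 0
    have e₁ := h1 0
    have e₂ := h2 0
    push_cast at h e₁ e₂ ⊢
    rw [alignPaths, Finset.sum_singleton, h, h0, e₁, e₂]
    simp
  | case2 p ih =>
    have h := hrec (p + 1) 0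
    have e := h1 (p + 1)
    push_cast at h e ih ⊢
    rw [add_sub_cancel_right] at h
    rw [alignPaths, sum_image_append_singleton, ih, h, h1 p, e]
    ring
  | case3 q ih =>
    have h := hrec 0 (q + 1)
    have e := h2 (q + 1)
    push_cast at h e ih ⊢
    rw [add_sub_cancel_right] at h
    rw [alignPaths, sum_image_append_singleton, ih, h, h2 q, e]
    ring
  | case4 p q ih₁ ih₂ ih₃ =>
    have h := hrec (p + 1) (q + 1)
    push_cast at h ih₁ ih₂ ih₃ ⊢
    rw [add_sub_cancel_right, add_sub_cancel_right] at h
    have disj {a b a' b' : ℕ} (hne : (a, b) ≠ (a', b')) :=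
      (Finset.disjoint_image (List.append_left_injective [(p + 1, q + 1)])).mpr
        (disjoint_alignPaths hne)
    rw [alignPaths, Finset.sum_union (Finset.disjoint_union_left.mpr
        ⟨disj (by simp), disj (by simp)⟩), Finset.sum_union (disj (by simp)),
      sum_image_append_singleton, sum_image_append_singleton, sum_image_append_singleton,
      ih₁, ih₂, ih₃, h]
    ring

/-- Dynamic programming correctness for the forward alignment matrix: if
`C : ℤ × ℤ → ℝ` satisfies the conventions `C(−1,−1) = 1`, `C(p,−1) = 0`,
`C(−1,q) = 0` for `p, q ≥ 0`, and the recursion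
`C(p,q) = k(p,q)·(C(p−1,q) + C(p−1,q−1) + C(p,q−1))` for `p, q ≥ 0`, then for all
natural numbers `p, q`, `C(p,q)` equals the sum over all alignment paths `π` from
`(0,0)` to `(p,q)` of the product `∏_l k(π(l))`. -/
theorem forward_matrix_dp_correct (k : ℕ × ℕ → ℝ) (C : ℤ → ℤ → ℝ)
    (h0 : C (-1) (-1) = 1)
    (h1 : ∀ p : ℕ, C (p : ℤ) (-1) = 0)
    (h2 : ∀ q : ℕ, C (-1) (q : ℤ) = 0)
    (hrec : ∀ p q : ℕ, C (p : ℤ) (q : ℤ) =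
      k (p, q) * (C ((p : ℤ) - 1) (q : ℤ) + C ((p : ℤ) - 1) ((q : ℤ) - 1) +
        C (p : ℤ) ((q : ℤ) - 1))) :
    ∀ p q : ℕ, C (p : ℤ) (q : ℤ) =
      ∑ᶠ π ∈ {π : List (ℕ × ℕ) | IsAlignPath (0, 0) (p, q) π}, (π.map k).prod := by
  intro p q
  have paths_eq : {π | IsAlignPath (0, 0) (p, q) π} = ↑(alignPaths p q) :=
    Set.ext fun _ => mem_alignPaths.symm
  rw [paths_eq, finsum_mem_coe_finset, sum_alignPaths_eq k C h0 h1 h2 hrec]
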